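/- arXiv:1701.08788 — 3 statements merged into one kernel-verified Lean document; each statement's English description precedes it below -/
import Mathlib

section
/- If S is a zero-sum free sequence of length n−2 in the cyclic group C_n (n ≥ 3), then either S = (g)^{n−2} for some g, or S = (g)^{n−3}(g^2) for some g. -/
/-!
The partial products `1, s₁, s₁s₂, …` of any listing of a product-one free sequence `S` are
pairwise distinct. When `|G| = |S| + 2` they therefore miss exactly one element of `G`, and for a
listing starting `x, y` with `x ≠ y` the missing element is `y`, because swapping `x` and `y`
turns the partial product `x` into `y` and leaves all others unchanged.
Comparing listings this way shows that after a pair `x ≠ y` all remaining terms are equal, and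
that three pairwise distinct terms are each the product of the other two; the latter yields two
distinct involutions, which a cyclic group does not have. So `S = h g^m` with `h ≠ g`, and
locating `g²` among the partial products of `h, g, …, g` gives `h = g²`.
-/

/-- A sequence (multiset) in a group is *free of product-1 subsequences* if no
nonempty subfamily can be multiplied in some order to give the identity. -/
def IsProdOneFree {G : Type*} [Group G] (S : Multiset G) : Prop :=
  ¬ ∃ T : Multiset G, T ≤ S ∧ T ≠ 0 ∧ ∃ l : List G, (l : Multiset G) = T ∧ l.prod = 1

theorem IsCyclic.eq_of_sq_eq_one {G : Type*} [Group G] [Finite G] [IsCyclic G] {x y : G}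
    (hx : x ^ 2 = 1) (hy : y ^ 2 = 1) (hx1 : x ≠ 1) (hy1 : y ≠ 1) : x = y := by
  classical
  have := Fintype.ofFinite G
  by_contra hxy
  have hsub : ({1, x, y} : Finset G) ⊆ ({a | a ^ 2 = 1} : Finset G) := by
    intro a ha
    simp only [Finset.mem_insert, Finset.mem_singleton] at ha
    rcases ha with rfl | rfl | rfl <;> simp [hx, hy]
  have h3 : ({1, x, y} : Finset G).card = 3 := by
    rw [Finset.card_insert_of_notMem (by simp [hx1.symm, hy1.symm]),
      Finset.card_pair hxy]
  have := (Finset.card_le_card hsub).trans (IsCyclic.card_pow_eq_one_le two_pos)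
  omega

theorem prod_take_swap_adjacent {M : Type*} [CommMonoid M] (l₁ l₂ : List M) (a b : M) {i : ℕ}
    (hi : i ≠ l₁.length + 1) :
    ((l₁ ++ a :: b :: l₂).take i).prod = ((l₁ ++ b :: a :: l₂).take i).prod := by
  rw [List.take_append, List.take_append, List.prod_append, List.prod_append]
  rcases h : i - l₁.length with _ | _ | j
  · rfl
  · omega
  · simp [mul_left_comm a b]

namespace IsProdOneFree

variable {G : Type*} [CommGroup G] {S : Multiset G}

theorem prod_ne_one (hS : IsProdOneFree S) {T : Multiset G} (hTS : T ≤ S) (hT : T ≠ 0) :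
    T.prod ≠ 1 := fun h =>
  hS ⟨T, hTS, hT, T.toList, T.coe_toList, by rwa [Multiset.prod_toList]⟩

theorem ne_one (hS : IsProdOneFree S) {a : G} (ha : a ∈ S) : a ≠ 1 := by
  simpa using hS.prod_ne_one (Multiset.singleton_le.2 ha) (Multiset.singleton_ne_zero a)

theorem injOn_prod_take {l : List G} (hl : IsProdOneFree (l : Multiset G)) :
    Set.InjOn (fun i => (l.take i).prod) (Set.Iic l.length) := by
  suffices h : ∀ i k, i + k ≤ l.length → (l.take (i + k)).prod = (l.take i).prod → k = 0 by
    intro i hi j hj hij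
    rcases le_total i j with hij' | hij'
    · obtain ⟨k, rfl⟩ := Nat.exists_eq_add_of_le hij'
      simp [h i k hj hij.symm]
    · obtain ⟨k, rfl⟩ := Nat.exists_eq_add_of_le hij'
      simp [h j k hi hij]
  intro i k hik h
  rw [List.take_add, List.prod_append, mul_eq_left] at h
  by_contra hk
  refine hl.prod_ne_one (T := ((l.drop i).take k : List G)) ?_ ?_ (by simpa using h)
  · exact Multiset.coe_le.2 ((List.take_sublist _ _).trans (List.drop_sublist _ _)).subperm
  · simp only [ne_eq, Multiset.coe_eq_zero, List.take_eq_nil_iff, List.drop_eq_nil_iff]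
    omega

theorem exists_prod_take_eq [Fintype G] (hS : IsProdOneFree S)
    (hG : Fintype.card G = Multiset.card S + 2) {x y : G} {t : List G}
    (hl : S = (x :: y :: t : List G)) (hxy : x ≠ y) {z : G} (hz : z ≠ y) :
    ∃ i ≤ t.length + 2, ((x :: y :: t).take i).prod = z := by
  classical
  subst hl
  have hS' : IsProdOneFree ((y :: x :: t : List G) : Multiset G) := by
    rwa [Multiset.coe_eq_coe.2 (List.Perm.swap x y t)]
  -- `y :: x :: t` has the same partial products as `x :: y :: t` except `y` in place of `x`.
  have hy : y ∉ (Finset.Iic (t.length + 2)).image fun i => ((x :: y :: t).take i).prod := by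
    simp only [Finset.mem_image, Finset.mem_Iic, not_exists, not_and]
    intro i hi h
    obtain rfl | hi1 := eq_or_ne i 1
    · exact hxy (by simpa using h)
    · refine hi1 (hS'.injOn_prod_take (by simpa using hi) (by simp) ?_)
      have hswap := prod_take_swap_adjacent [] t x y hi1
      rw [List.nil_append, List.nil_append] at hswap
      simpa [← hswap] using h
  have hcard : (insert y ((Finset.Iic (t.length + 2)).image
      fun i => ((x :: y :: t).take i).prod)).card = Fintype.card G := by
    rw [Finset.card_insert_of_notMem hy, Finset.card_image_of_injOn, Nat.card_Iic, hG]
    · simp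
    · simpa using hS.injOn_prod_take
  have hzmem := Finset.mem_univ z
  rw [← Finset.eq_univ_of_card _ hcard] at hzmem
  simpa [hz] using hzmem

theorem eq_of_cons_of_ne [Fintype G] (hS : IsProdOneFree S)
    (hG : Fintype.card G = Multiset.card S + 2) {x y c d : G} {U : Multiset G}
    (hU : S = x ::ₘ y ::ₘ c ::ₘ d ::ₘ U) (hxy : x ≠ y) : c = d := by
  obtain ⟨u, rfl⟩ : ∃ u : List G, (u : Multiset G) = U := ⟨U.toList, U.coe_toList⟩
  subst hU
  have hxc : x * y * c ≠ y := by
    rw [mul_right_comm, Ne, mul_eq_right]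
    simpa using hS.prod_ne_one (T := [x, c])
      (Multiset.coe_le.2 (List.Sublist.subperm (by simp))) (by simp)
  obtain ⟨i, hi, h⟩ := hS.exists_prod_take_eq hG (t := d :: c :: u)
    (Multiset.coe_eq_coe.2 (((List.Perm.swap d c u).cons y).cons x)) hxy hxc
  by_contra hcd
  have hi3 : i ≠ 3 := by
    rintro rfl
    exact hcd (by simpa [mul_assoc] using h.symm)
  have hswap := prod_take_swap_adjacent [x, y] u c d hi3
  simp only [List.cons_append, List.nil_append] at hswap
  refine hi3 (hS.injOn_prod_take (by simpa using hi) (by simp) ?_)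
  simpa [hswap, mul_assoc] using h

theorem eq_mul_of_cons [Fintype G] (hS : IsProdOneFree S)
    (hG : Fintype.card G = Multiset.card S + 2) {x y z : G} {U : Multiset G}
    (hU : S = x ::ₘ y ::ₘ z ::ₘ U) (hxy : x ≠ y) (hzx : z ≠ x) (hzy : z ≠ y) :
    z = x * y := by
  obtain ⟨u, rfl⟩ : ∃ u : List G, (u : Multiset G) = U := ⟨U.toList, U.coe_toList⟩
  subst hU
  obtain ⟨i, hi, h⟩ := hS.exists_prod_take_eq hG (t := z :: u) rfl hxy hzy
  rcases i with _ | _ | _ | k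
  · exact absurd h.symm (hS.ne_one (by simp))
  · exact absurd h.symm (by simpa using hzx)
  · simpa using h.symm
  · refine absurd ?_ (hS.prod_ne_one (T := ↑(x :: y :: u.take k))
      (Multiset.coe_le.2 (List.Sublist.subperm (by simp [List.take_sublist]))) (by simp))
    simp only [List.take_succ_cons, List.prod_cons] at h
    rw [Multiset.prod_coe, List.prod_cons, List.prod_cons, ← mul_eq_right (b := z)]
    conv_rhs => rw [← h]
    ac_rfl

theorem eq_or_eq_of_cons [Fintype G] [IsCyclic G] (hS : IsProdOneFree S)
    (hG : Fintype.card G = Multiset.card S + 2) {x y z : G} {U : Multiset G}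
    (hU : S = x ::ₘ y ::ₘ z ::ₘ U) (hxy : x ≠ y) : z = x ∨ z = y := by
  by_contra! h
  have hz : z = x * y := hS.eq_mul_of_cons hG hU hxy h.1 h.2
  have hy : y = x * z := hS.eq_mul_of_cons hG (x := x) (y := z) (U := U)
    (by rw [hU, Multiset.cons_swap y z]) h.1.symm hxy.symm h.2.symm
  have hx : x = y * z := hS.eq_mul_of_cons hG (x := y) (y := z) (U := U)
    (by rw [hU, Multiset.cons_swap x y, Multiset.cons_swap x z]) h.2.symm hxy h.1.symm
  -- Each of `x, y, z` is the product of the other two, so `x` and `y` are distinct involutions.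
  have hx2 : x ^ 2 = 1 := (mul_eq_right (b := y)).1 <| by
    rw [hz] at hy
    rw [sq, mul_assoc, ← hy]
  have hy2 : y ^ 2 = 1 := (mul_eq_right (b := x)).1 <| by
    rw [hz] at hx
    conv_rhs => rw [hx]
    rw [sq]
    ac_rfl
  exact hxy (IsCyclic.eq_of_sq_eq_one hx2 hy2 (hS.ne_one (by simp [hU]))
    (hS.ne_one (by simp [hU])))

theorem eq_sq_or_sq_eq_one [Fintype G] (hS : IsProdOneFree S)
    (hG : Fintype.card G = Multiset.card S + 2) {h g : G} {k : ℕ}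
    (hU : S = h ::ₘ Multiset.replicate (k + 1) g) (hhg : h ≠ g) : h = g ^ 2 ∨ g ^ 2 = 1 := by
  subst hU
  have hg2 : g ^ 2 ≠ g := by
    rw [sq, Ne, mul_eq_left]
    exact hS.ne_one (by simp)
  obtain ⟨i, hi, hprod⟩ := hS.exists_prod_take_eq hG (t := List.replicate k g)
    (by rw [Multiset.replicate_succ, ← Multiset.coe_replicate]; rfl) hhg hg2
  rcases i with _ | j
  · exact Or.inr (by simpa using hprod.symm)
  have hj : h * g ^ j = g ^ 2 := by
    rw [← hprod, ← List.replicate_succ, List.take_succ_cons, List.prod_cons,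
      List.take_replicate, List.prod_replicate, min_eq_left (by simpa using hi)]
  rcases j with _ | _ | j
  · exact Or.inl (by simpa using hj)
  · exact absurd (mul_right_cancel (b := g) (by simpa [sq] using hj)) hhg
  · refine absurd (mul_right_cancel (b := g ^ 2) ?_) (hS.prod_ne_one
      (T := h ::ₘ Multiset.replicate j g) ?_ (by simp))
    · rw [Multiset.prod_cons, Multiset.prod_replicate, one_mul, mul_assoc, ← pow_add]
      exact hj
    · rw [List.length_replicate] at hi
      exact Multiset.cons_le_cons h ((Multiset.replicate_le_replicate g).2 (by omega))

theorem exists_eq_cons_replicate [Fintype G] [IsCyclic G] (hS : IsProdOneFree S)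
    (hG : Fintype.card G = Multiset.card S + 2) {x y : G} (hx : x ∈ S) (hy : y ∈ S)
    (hxy : x ≠ y) : ∃ h g m, h ≠ g ∧ S = h ::ₘ Multiset.replicate (m + 1) g := by
  obtain ⟨R, rfl⟩ := Multiset.exists_cons_of_mem hx
  obtain ⟨R, rfl⟩ :=
    Multiset.exists_cons_of_mem ((Multiset.mem_cons.1 hy).resolve_left hxy.symm)
  rcases R.empty_or_exists_mem with rfl | ⟨g, hg⟩
  · exact ⟨x, y, 0, hxy, rfl⟩
  obtain ⟨R, rfl⟩ := Multiset.exists_cons_of_mem hg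
  have hR : R = Multiset.replicate (Multiset.card R) g := Multiset.eq_replicate.2 ⟨rfl,
    fun c hc => by
      obtain ⟨R, rfl⟩ := Multiset.exists_cons_of_mem hc
      exact (hS.eq_of_cons_of_ne hG rfl hxy).symm⟩
  rcases hS.eq_or_eq_of_cons hG rfl hxy with rfl | rfl <;> rw [hR]
  · refine ⟨y, g, Multiset.card R + 1, hxy.symm, ?_⟩
    simp [Multiset.replicate_succ, Multiset.cons_swap]
  · exact ⟨x, g, Multiset.card R + 1, hxy, by simp [Multiset.replicate_succ]⟩

theorem exists_eq_sq_cons_replicate [Fintype G] [IsCyclic G] (hS : IsProdOneFree S)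
    (hG : Fintype.card G = Multiset.card S + 2) {h g : G} {m : ℕ}
    (hU : S = h ::ₘ Multiset.replicate (m + 1) g) (hhg : h ≠ g) :
    ∃ g', S = g' ^ 2 ::ₘ Multiset.replicate (m + 1) g' := by
  rcases hS.eq_sq_or_sq_eq_one hG hU hhg with rfl | hg2
  · exact ⟨g, hU⟩
  obtain rfl : m = 0 := by
    by_contra hm0
    refine hS.prod_ne_one (T := Multiset.replicate 2 g) ?_ (by simp) (by simpa [sq] using hg2)
    rw [hU]
    exact ((Multiset.replicate_le_replicate g).2 (by omega)).trans (Multiset.le_cons_self _ h)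
  have hU' : S = g ::ₘ Multiset.replicate 1 h := hU.trans (Multiset.pair_comm _ _)
  rcases hS.eq_sq_or_sq_eq_one hG hU' hhg.symm with rfl | hh2
  · exact ⟨h, hU'⟩
  · exact absurd (IsCyclic.eq_of_sq_eq_one hh2 hg2 (hS.ne_one (by simp [hU]))
      (hS.ne_one (by simp [hU]))) hhg

end IsProdOneFree

theorem inverse_cyclic_nsub2 (n : ℕ) (hn : 3 ≤ n)
    (S : Multiset (Multiplicative (ZMod n))) (hS : Multiset.card S = n - 2)
    (hfree : IsProdOneFree S) :
    (∃ g : Multiplicative (ZMod n), S = Multiset.replicate (n - 2) g) ∨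
    (∃ g : Multiplicative (ZMod n), S = Multiset.replicate (n - 3) g + {g ^ 2}) := by
  have : NeZero n := ⟨by omega⟩
  have hG : Fintype.card (Multiplicative (ZMod n)) = Multiset.card S + 2 := by
    rw [hS, Fintype.card_multiplicative, ZMod.card]
    omega
  obtain ⟨s, hs⟩ := Multiset.card_pos_iff_exists_mem.1 (by omega : 0 < Multiset.card S)
  by_cases hconst : ∀ x ∈ S, x = s
  · exact Or.inl ⟨s, Multiset.eq_replicate.2 ⟨hS, hconst⟩⟩
  push Not at hconst
  obtain ⟨x, hx, hxs⟩ := hconst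
  obtain ⟨h, g, m, hhg, hU⟩ := hfree.exists_eq_cons_replicate hG hx hs hxs
  obtain ⟨g', rfl⟩ := hfree.exists_eq_sq_cons_replicate hG hU hhg
  have hm : n - 3 = m + 1 := by
    simp only [Multiset.card_cons, Multiset.card_replicate] at hS
    omega
  exact Or.inr ⟨g', by rw [hm, ← Multiset.singleton_add, add_comm]⟩
end

section
/- For n ≥ 3, in the dicyclic group Q_{4n}, any sequence of the form (y^t)^{2n−1}(xy^s), where gcd(t, 2n) = 1 and 0 ≤ s ≤ 2n−1, is free of product-1 subsequences. -/
section ProdOneFree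

variable {G : Type*} [Group G]

theorem Multiset.prod_map_coe_eq_one_of_prod_eq_one {H : Type*} [CommGroup H] (φ : G →* H)
    {l : List G} (hl : l.prod = 1) : ((l : Multiset G).map φ).prod = 1 := by
  rw [Multiset.map_coe, Multiset.prod_coe, ← map_list_prod, hl, map_one]

theorem isProdOneFree_replicate {g : G} {k : ℕ} (hk : k < orderOf g) :
    IsProdOneFree (Multiset.replicate k g) := by
  rintro ⟨T, hT, hT0, l, rfl, hl⟩
  obtain ⟨m, hmk, hm⟩ := Multiset.le_replicate_iff.1 hT
  obtain ⟨hlen, hlg⟩ := Multiset.eq_replicate.1 hm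
  have hm0 : m ≠ 0 := by rintro rfl; exact hT0 (by simpa using hm)
  rw [List.prod_eq_pow_card l g fun x hx => hlg x (Multiset.mem_coe.2 hx),
    ← Multiset.coe_card, hlen] at hl
  exact pow_ne_one_of_lt_orderOf hm0 (hmk.trans_lt hk) hl

theorem IsProdOneFree.cons {H : Type*} [CommGroup H] (φ : G →* H) {S : Multiset G} {b : G}
    (hS : IsProdOneFree S) (hSφ : ∀ g ∈ S, φ g = 1) (hb : φ b ≠ 1) :
    IsProdOneFree (b ::ₘ S) := by
  rintro ⟨T, hT, hT0, l, rfl, hl⟩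
  by_cases hbT : b ∈ (l : Multiset G)
  · obtain ⟨T', hT'⟩ := Multiset.exists_cons_of_mem hbT
    have hT'S : T' ≤ S := (Multiset.cons_le_cons_iff b).1 (hT' ▸ hT)
    have hT'φ : (T'.map φ).prod = 1 := by
      rw [Multiset.map_congr rfl fun g hg => hSφ g (Multiset.mem_of_le hT'S hg),
        Multiset.prod_map_one]
    apply hb
    simpa [hT', hT'φ] using Multiset.prod_map_coe_eq_one_of_prod_eq_one φ hl
  · exact hS ⟨l, (Multiset.le_cons_of_notMem hbT).1 hT, hT0, l, rfl, hl⟩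

end ProdOneFree

namespace QuaternionGroup

variable {n : ℕ}

def sign : QuaternionGroup n →* ℤˣ where
  toFun
    | a _ => 1
    | xa _ => -1
  map_one' := rfl
  map_mul' := by rintro (i | i) (j | j) <;> simp

@[simp]
theorem sign_a (i : ZMod (2 * n)) : sign (a i) = 1 := rfl

@[simp]
theorem sign_xa (i : ZMod (2 * n)) : sign (xa i) = -1 := rfl

theorem orderOf_a_natCast_of_coprime {t : ℕ} (ht : Nat.Coprime t (2 * n)) :
    orderOf (a (t : ZMod (2 * n))) = 2 * n := by
  rw [← a_one_pow, Nat.Coprime.orderOf_pow (by rw [orderOf_a_one]; exact ht.symm), orderOf_a_one]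

end QuaternionGroup

theorem dicyclic_extremal_is_free_general (n : ℕ) (hn : 3 ≤ n) (t s : ℕ)
    (htn : Nat.gcd t (2 * n) = 1) :
    IsProdOneFree
      (Multiset.replicate (2 * n - 1) (QuaternionGroup.a (t : ZMod (2 * n))) +
        {QuaternionGroup.xa (s : ZMod (2 * n))}) := by
  have hord : 2 * n - 1 < orderOf (QuaternionGroup.a (t : ZMod (2 * n))) := by
    rw [QuaternionGroup.orderOf_a_natCast_of_coprime htn]
    omega
  rw [Multiset.add_comm, Multiset.singleton_add]
  refine (isProdOneFree_replicate hord).cons QuaternionGroup.sign ?_ (by simp)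
  intro g hg
  rw [Multiset.eq_of_mem_replicate hg, QuaternionGroup.sign_a]

theorem dicyclic_extremal_is_free (n : ℕ) (hn : 3 ≤ n) (t s : ℕ)
    (htn : Nat.gcd t (2 * n) = 1) (hs : s ≤ 2 * n - 1) :
    IsProdOneFree
      (Multiset.replicate (2 * n - 1) (QuaternionGroup.a (t : ZMod (2 * n))) +
        {QuaternionGroup.xa (s : ZMod (2 * n))}) :=
  dicyclic_extremal_is_free_general n hn t s htn
end

section
/- In the dicyclic group Q_{12} = ⟨x, y | x² = y³, y⁶ = 1, yx = xy⁻¹⟩, if S is a sequence of 6 elements free of product-1 subsequences with exactly 5 elements in ⟨y⟩, then S = (y^r)^5 (xy^s) for some r ∈ {1, 5} and s ∈ {0, …, 5}. -/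
def ZeroSumFree {G : Type*} [AddCommMonoid G] (M : Multiset G) : Prop :=
  ∀ T ≤ M, T ≠ 0 → T.sum ≠ 0

namespace ZeroSumFree

variable {G : Type*} [AddCommGroup G]

theorem take_sum_injective {l : List G} (hl : ZeroSumFree (l : Multiset G)) :
    Function.Injective fun k : Fin (l.length + 1) => (l.take k).sum := by
  suffices ∀ i j : ℕ, i < j → j ≤ l.length → (l.take i).sum ≠ (l.take j).sum by
    intro i j hij
    by_contra hne
    rcases lt_or_gt_of_ne (Fin.val_ne_of_ne hne) with h | h
    · exact this i j h (by omega) hij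
    · exact this j i h (by omega) hij.symm
  intro i j hij hj heq
  obtain ⟨d, rfl⟩ := Nat.exists_eq_add_of_le hij.le
  rw [List.take_add, List.sum_append, left_eq_add] at heq
  refine hl ((l.drop i).take d) ?_ ?_ (by simpa using heq)
  · exact Multiset.coe_le.mpr (((List.take_sublist _ _).trans (List.drop_sublist _ _)).subperm)
  · rw [Ne, Multiset.coe_eq_zero, ← List.length_eq_zero_iff, List.length_take, List.length_drop]
    omega

theorem exists_take_sum_eq [Finite G] {l : List G} (hl : ZeroSumFree (l : Multiset G))
    (hcard : l.length + 1 = Nat.card G) (g : G) : ∃ k ≤ l.length, (l.take k).sum = g := by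
  obtain ⟨k, hk⟩ := (hl.take_sum_injective.bijective_of_nat_card_le (by simp [hcard])).2 g
  exact ⟨k, Nat.lt_succ_iff.mp k.isLt, hk⟩

theorem eq_of_cons_cons_eq [Finite G] {M R : Multiset G} {x y : G} (hM : ZeroSumFree M)
    (hcard : Multiset.card M + 1 = Nat.card G) (hxy : x ::ₘ y ::ₘ R = M) : x = y := by
  have hl : ((x :: y :: R.toList : List G) : Multiset G) = M := by
    rw [← hxy, ← Multiset.cons_coe, ← Multiset.cons_coe, Multiset.coe_toList]
  obtain ⟨k, -, hk⟩ := exists_take_sum_eq (hl ▸ hM) (by simpa [← Multiset.coe_card, hl]) y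
  match k, hk with
  | 0, hk => exact absurd hk.symm (by simpa using hM {y} (by simp [← hxy]) (by simp))
  | 1, hk => simpa using hk
  | k + 2, hk =>
    refine absurd ?_ (hM (x ::ₘ (R.toList.take k : Multiset G)) ?_ (by simp))
    · simpa [add_left_comm x y] using hk
    · rw [← hxy]
      refine Multiset.cons_le_cons _ (le_trans ?_ (Multiset.le_cons_self R y))
      calc (R.toList.take k : Multiset G) ≤ R.toList :=
            Multiset.coe_le.mpr (List.take_sublist _ _).subperm
        _ = R := Multiset.coe_toList R

theorem lt_addOrderOf_of_replicate {n : ℕ} {a : G} (ha : IsOfFinAddOrder a)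
    (h : ZeroSumFree (Multiset.replicate n a)) : n < addOrderOf a := by
  by_contra! hle
  refine h _ ((Multiset.replicate_le_replicate a).mpr hle) ?_ ?_
  · exact Multiset.card_pos.mp (by simpa using ha.addOrderOf_pos)
  · simp [addOrderOf_nsmul_eq_zero]

theorem eq_replicate_of_card_add_one [Finite G] {M : Multiset G} (hM : ZeroSumFree M)
    (hcard : Multiset.card M + 1 = Nat.card G) :
    ∃ a, addOrderOf a = Nat.card G ∧ M = Multiset.replicate (Multiset.card M) a := by
  classical
  obtain ⟨a, hMa⟩ : ∃ a, M = Multiset.replicate (Multiset.card M) a := by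
    rcases Multiset.empty_or_exists_mem M with rfl | ⟨a, ha⟩
    · exact ⟨0, rfl⟩
    refine ⟨a, Multiset.eq_replicate_card.mpr fun b hb => ?_⟩
    by_contra hba
    have hb' : b ∈ M.erase a := (Multiset.mem_erase_of_ne hba).mpr hb
    refine hba (hM.eq_of_cons_cons_eq hcard (R := (M.erase a).erase b) ?_).symm
    rw [Multiset.cons_erase hb', Multiset.cons_erase ha]
  refine ⟨a, le_antisymm ?_ ?_, hMa⟩
  · exact Nat.le_of_dvd Nat.card_pos (addOrderOf_dvd_natCard a)
  · exact hcard ▸ lt_addOrderOf_of_replicate (isOfFinAddOrder_of_finite a) (hMa ▸ hM)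

end ZeroSumFree

theorem Multiset.exists_map_eq_of_forall_mem_range {α β : Type*} {f : α → β} {s : Multiset β}
    (h : ∀ b ∈ s, b ∈ Set.range f) : ∃ t : Multiset α, t.map f = s := by
  induction s using Multiset.induction_on with
  | empty => exact ⟨0, rfl⟩
  | cons b s ih =>
    obtain ⟨a, rfl⟩ := h b (Multiset.mem_cons_self _ _)
    obtain ⟨t, rfl⟩ := ih fun c hc => h c (Multiset.mem_cons_of_mem hc)
    exact ⟨a ::ₘ t, Multiset.map_cons _ _ _⟩

theorem IsProdOneFree.zeroSumFree_of_map_le {A G : Type*} [AddCommMonoid A] [Group G]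
    (f : Multiplicative A →* G) {S : Multiset G} {M : Multiset A} (hS : IsProdOneFree S)
    (hM : M.map (f ∘ Multiplicative.ofAdd) ≤ S) : ZeroSumFree M := by
  intro T hT hT0 hsum
  refine hS ⟨T.map (f ∘ Multiplicative.ofAdd), (Multiset.map_le_map hT).trans hM, by simpa,
    T.toList.map (f ∘ Multiplicative.ofAdd), by rw [← Multiset.map_coe, Multiset.coe_toList], ?_⟩
  rw [← List.map_map, ← map_list_prod, ← ofAdd_list_prod, Multiset.sum_toList, hsum]
  exact map_one f

def QuaternionGroup.aHom (n : ℕ) : Multiplicative (ZMod (2 * n)) →* QuaternionGroup n where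
  toFun i := QuaternionGroup.a i.toAdd
  map_one' := rfl
  map_mul' _ _ := (QuaternionGroup.a_mul_a _ _).symm

theorem ZMod.eq_one_or_eq_five_of_addOrderOf_eq_six {a : ZMod 6} (h : addOrderOf a = 6) :
    a = 1 ∨ a = 5 := by
  obtain ⟨k, hk, rfl⟩ : ∃ k : ℕ, k < 6 ∧ (k : ZMod 6) = a :=
    ⟨a.val, a.val_lt, a.natCast_zmod_val⟩
  rw [ZMod.addOrderOf_coe _ (by norm_num)] at h
  interval_cases k <;> first | decide | norm_num at h

open scoped Classical in
theorem inverse_dicyclic_twelve_case5 (S : Multiset (QuaternionGroup 3))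
    (hS : Multiset.card S = 6) (hfree : IsProdOneFree S)
    (h5 : Multiset.card
      (S.filter (fun g => ∃ i : ZMod 6, g = QuaternionGroup.a i)) = 5) :
    ∃ r s : ZMod 6, (r = 1 ∨ r = 5) ∧
      S = Multiset.replicate 5 (QuaternionGroup.a r) + {QuaternionGroup.xa s} := by
  set P : QuaternionGroup 3 → Prop := fun g => ∃ i : ZMod 6, g = QuaternionGroup.a i
  obtain ⟨M, hM⟩ : ∃ M : Multiset (ZMod 6), M.map QuaternionGroup.a = S.filter P :=
    Multiset.exists_map_eq_of_forall_mem_range fun g hg =>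
      let ⟨i, hi⟩ := (Multiset.mem_filter.mp hg).2; ⟨i, hi.symm⟩
  obtain ⟨x, hx⟩ : ∃ x, S.filter (fun g => ¬ P g) = {x} := by
    have := Multiset.card_add (S.filter P) (S.filter (fun g => ¬ P g))
    rw [Multiset.filter_add_not, hS, h5] at this
    exact Multiset.card_eq_one.mp (by omega)
  obtain ⟨s, rfl⟩ : ∃ s, x = QuaternionGroup.xa s := by
    obtain ⟨-, hxP⟩ := Multiset.mem_filter.mp (hx ▸ Multiset.mem_singleton_self x)
    rcases x with i | s
    exacts [absurd ⟨i, rfl⟩ hxP, ⟨s, rfl⟩]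
  have hMfree : ZeroSumFree M :=
    hfree.zeroSumFree_of_map_le (QuaternionGroup.aHom 3) (hM ▸ Multiset.filter_le _ _)
  have hM5 : Multiset.card M = 5 := by rw [← h5, ← hM, Multiset.card_map]
  obtain ⟨r, hr, hMr⟩ := hMfree.eq_replicate_of_card_add_one (by simp [hM5])
  refine ⟨r, s, ZMod.eq_one_or_eq_five_of_addOrderOf_eq_six (by simpa using hr), ?_⟩
  rw [← Multiset.filter_add_not P S, ← hM, hMr, hM5, Multiset.map_replicate, hx]
end
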